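/- arXiv:2404.19645 — 3 statements merged into one kernel-verified Lean document; each statement's English description precedes it below -/
import Mathlib

section
/- Let f(t,s) = f̃(t)Θ(t−s) where f̃ is continuous on [a,b] and Θ is the Heaviside function, and define the ★-product by (g ★ h)(t,s) = ∫ₐᵇ g(t,τ)h(τ,s) dτ. If F̃ is a primitive of f̃, then for every n ≥ 1 the n-th ★-power satisfies f^{★n}(t,s) = f̃(t)·(F̃(t) − F̃(s))^{n−1}/(n−1)! · Θ(t−s). -/
open MeasureTheory Set

/-- Heaviside function: `Θ x = 1` if `x ≥ 0`, else `0`. -/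
noncomputable def Heaviside (x : ℝ) : ℝ := if 0 ≤ x then 1 else 0

/-- The `★`-product of two kernels on `[a,b]²`:
`(g ★ h)(t,s) = ∫_a^b g(t,τ) h(τ,s) dτ`. -/
noncomputable def starProd (a b : ℝ) (g h : ℝ → ℝ → ℂ) : ℝ → ℝ → ℂ :=
  fun t s => ∫ τ in a..b, g t τ * h τ s

/-- `starPow a b f n` is the `(n+1)`-st `★`-power `f^{★(n+1)} = f ★ ⋯ ★ f`
(`n+1` factors). -/
noncomputable def starPow (a b : ℝ) (f : ℝ → ℝ → ℂ) : ℕ → ℝ → ℝ → ℂ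
  | 0 => f
  | n + 1 => starProd a b f (starPow a b f n)

/-! The kernel `Θ(t - τ) Θ(τ - s)` is the indicator of `[s, t]`, so one more `★`-factor of `f`
turns `f^{★(n+1)}(t, s)` into `f̃(t) Θ(t - s) ∫ₛᵗ f̃(τ) (F̃(τ) - F̃(s))ⁿ / n! dτ`, and the integrand is
the derivative of `(F̃(τ) - F̃(s))ⁿ⁺¹ / (n+1)!`. Induction on `n` then gives the formula. -/

lemma heaviside_sub_of_le {s t : ℝ} (h : s ≤ t) : Heaviside (t - s) = 1 := by
  simp [Heaviside, h]

lemma heaviside_sub_of_lt {s t : ℝ} (h : t < s) : Heaviside (t - s) = 0 := by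
  simp [Heaviside, h]

lemma heaviside_sub_mul_heaviside_sub (s τ t : ℝ) :
    Heaviside (t - τ) * Heaviside (τ - s) = (Icc s t).indicator 1 τ := by
  by_cases hτt : τ ≤ t <;> by_cases hsτ : s ≤ τ <;>
    simp [Heaviside, hτt, hsτ]

lemma intervalIntegral_indicator_Icc {E : Type*} [NormedAddCommGroup E] [NormedSpace ℝ E]
    {a b s t : ℝ} (has : a ≤ s) (htb : t ≤ b) (hst : s ≤ t) (g : ℝ → E) :
    ∫ τ in a..b, (Icc s t).indicator g τ = ∫ τ in s..t, g τ := by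
  have hsets : (Ioc a b ∩ Icc s t : Set ℝ) =ᵐ[volume] Icc s t := by
    have := (Ioc_ae_eq_Icc (a := a) (b := b) (μ := volume)).inter (ae_eq_refl (Icc s t))
    rwa [inter_eq_right.mpr (Icc_subset_Icc has htb)] at this
  rw [intervalIntegral.integral_of_le (has.trans (hst.trans htb)),
    setIntegral_indicator measurableSet_Icc, setIntegral_congr_set hsets,
    integral_Icc_eq_integral_Ioc, intervalIntegral.integral_of_le hst]

lemma intervalIntegral_heaviside_mul_heaviside {a b s t : ℝ} (hs : s ∈ Icc a b) (ht : t ∈ Icc a b)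
    (g : ℝ → ℂ) :
    ∫ τ in a..b, (Heaviside (t - τ) : ℂ) * (g τ * Heaviside (τ - s))
      = (∫ τ in s..t, g τ) * Heaviside (t - s) := by
  have hind (τ : ℝ) : (Heaviside (t - τ) : ℂ) * (g τ * Heaviside (τ - s)) =
      (Icc s t).indicator g τ := by
    rw [mul_left_comm, ← Complex.ofReal_mul, heaviside_sub_mul_heaviside_sub]
    by_cases hτ : τ ∈ Icc s t <;> simp [hτ]
  simp_rw [hind]
  rcases le_or_gt s t with hst | hts
  · rw [intervalIntegral_indicator_Icc hs.1 ht.2 hst, heaviside_sub_of_le hst]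
    simp
  · simp [Icc_eq_empty_of_lt hts, heaviside_sub_of_lt hts]

lemma intervalIntegral_eq_sub_of_hasDerivWithinAt_Icc {E : Type*} [NormedAddCommGroup E]
    [NormedSpace ℝ E] [CompleteSpace E] {a b s t : ℝ} {F f : ℝ → E}
    (hf : ContinuousOn f (Icc a b)) (hF : ∀ x ∈ Icc a b, HasDerivWithinAt F (f x) (Icc a b) x)
    (hs : s ∈ Icc a b) (ht : t ∈ Icc a b) :
    ∫ τ in s..t, f τ = F t - F s := by
  have hsub : uIcc s t ⊆ Icc a b := uIcc_subset_Icc hs ht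
  refine intervalIntegral.integral_eq_sub_of_hasDeriv_right
    (fun x hx => (hF x (hsub hx)).continuousWithinAt.mono hsub) (fun x hx => ?_)
    ((hf.mono hsub).intervalIntegrable)
  have hx' : x ∈ Ioo a b := Ioo_subset_Ioo (le_inf hs.1 ht.1) (sup_le hs.2 ht.2) hx
  exact ((hF x (Ioo_subset_Icc_self hx')).hasDerivAt (Icc_mem_nhds hx'.1 hx'.2)).hasDerivWithinAt

lemma HasDerivWithinAt.sub_const_pow_succ_div_factorial {F : ℝ → ℂ} {f' c : ℂ} {u : Set ℝ} {x : ℝ}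
    (hF : HasDerivWithinAt F f' u x) (n : ℕ) :
    HasDerivWithinAt (fun τ => (F τ - c) ^ (n + 1) / (n + 1).factorial)
      (f' * (F x - c) ^ n / n.factorial) u x := by
  refine (((hF.sub_const c).fun_pow (n + 1)).div_const ((n + 1).factorial : ℂ)).congr_deriv ?_
  have hn : (n.factorial : ℂ) ≠ 0 := by exact_mod_cast n.factorial_ne_zero
  rw [Nat.add_sub_cancel, Nat.factorial_succ]
  push_cast
  field_simp

theorem starPow_eq_general (a b : ℝ) (ft Ft : ℝ → ℂ)
    (hcont : ContinuousOn ft (Icc a b))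
    (hprim : ∀ t ∈ Icc a b, HasDerivWithinAt Ft (ft t) (Icc a b) t)
    (f : ℝ → ℝ → ℂ) (hf : ∀ t s, f t s = ft t * (Heaviside (t - s) : ℝ)) :
    ∀ n : ℕ, ∀ t ∈ Icc a b, ∀ s ∈ Icc a b,
      starPow a b f n t s
        = ft t * (Ft t - Ft s) ^ n / (Nat.factorial n : ℂ) * (Heaviside (t - s) : ℝ) := by
  intro n
  induction n with
  | zero => simp [starPow, hf]
  | succ n ih =>
    intro t ht s hs
    set g : ℝ → ℂ := fun τ => ft τ * (Ft τ - Ft s) ^ n / n.factorial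
    have hg : ContinuousOn g (Icc a b) :=
      (hcont.mul (((HasDerivWithinAt.continuousOn hprim).sub continuousOn_const).pow n)).div_const _
    have hG (x : ℝ) (hx : x ∈ Icc a b) := (hprim x hx).sub_const_pow_succ_div_factorial (c := Ft s) n
    calc starPow a b f (n + 1) t s
        = ∫ τ in a..b, ft t * ((Heaviside (t - τ) : ℂ) * (g τ * Heaviside (τ - s))) := by
          refine intervalIntegral.integral_congr fun τ hτ => ?_
          rw [uIcc_of_le (hs.1.trans hs.2)] at hτ
          simp only [hf, ih τ hτ s hs, g]
          ring
      _ = ft t * ((∫ τ in s..t, g τ) * Heaviside (t - s)) := by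
          rw [intervalIntegral.integral_const_mul, intervalIntegral_heaviside_mul_heaviside hs ht]
      _ = _ := by
          rw [intervalIntegral_eq_sub_of_hasDerivWithinAt_Icc hg hG hs ht]
          simp only [sub_self, zero_pow n.succ_ne_zero, zero_div, sub_zero]
          ring

/-- If `f(t,s) = f̃(t) Θ(t-s)` with `f̃` continuous on `[a,b]` and `F̃` a primitive of
`f̃`, then `f^{★n}(t,s) = f̃(t) (F̃(t) - F̃(s))^{n-1}/(n-1)! Θ(t-s)` for all `n ≥ 1`
(here `starPow a b f n = f^{★(n+1)}`). -/
theorem starPow_eq (a b : ℝ) (hab : a ≤ b) (ft Ft : ℝ → ℂ)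
    (hcont : ContinuousOn ft (Icc a b))
    (hprim : ∀ t ∈ Icc a b, HasDerivWithinAt Ft (ft t) (Icc a b) t)
    (f : ℝ → ℝ → ℂ) (hf : ∀ t s, f t s = ft t * (Heaviside (t - s) : ℝ)) :
    ∀ n : ℕ, ∀ t ∈ Icc a b, ∀ s ∈ Icc a b,
      starPow a b f n t s
        = ft t * (Ft t - Ft s) ^ n / (Nat.factorial n : ℂ) * (Heaviside (t - s) : ℝ) :=
  starPow_eq_general a b ft Ft hcont hprim f hf
end

section
/- For continuous f̃ : [a,b] → ℂ with primitive F̃, the series ∑_{n=1}^∞ (Θ ★ f^{★n})(t,s) converges for all (t,s) and Θ(t−s) + ∑_{n=1}^∞ (Θ ★ f^{★n})(t,s) = exp(F̃(t) − F̃(s))·Θ(t−s). -/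
open MeasureTheory Set

/-- The Heaviside kernel `Θ(t,s) := Θ(t-s)`. -/
noncomputable def thetaK : ℝ → ℝ → ℂ := fun t s => (Heaviside (t - s) : ℝ)
/-
Since `Θ(t-τ) Θ(τ-s)` is the indicator of `s ≤ τ ≤ t`, `★`-multiplying a kernel vanishing for
`τ < s` by `Θ` on the left integrates it from `s` to `t`. With the fundamental theorem of calculus
this gives, by induction, `f^{★(n+1)}(t,s) = f̃(t) (F̃(t) - F̃(s))ⁿ / n! Θ(t-s)`, and then
`(Θ ★ f^{★(n+1)})(t,s) = (F̃(t) - F̃(s))ⁿ⁺¹ / (n+1)! Θ(t-s)`: together with `Θ(t-s)` these are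
the terms of the exponential series.
-/

open scoped Nat

theorem heaviside_of_nonneg {x : ℝ} (hx : 0 ≤ x) : Heaviside x = 1 := if_pos hx

theorem heaviside_of_neg {x : ℝ} (hx : x < 0) : Heaviside x = 0 := if_neg hx.not_ge

theorem integral_heaviside_mul_heaviside_mul {a b s t : ℝ} (has : a ≤ s) (htb : t ≤ b)
    (g : ℝ → ℂ) :
    ∫ τ in a..b, ((Heaviside (t - τ) : ℝ) : ℂ) * (Heaviside (τ - s) : ℝ) * g τ
      = (Heaviside (t - s) : ℝ) * ∫ τ in s..t, g τ := by
  rcases le_or_gt s t with hst | hts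
  · have hind : ∀ τ, ((Heaviside (t - τ) : ℝ) : ℂ) * (Heaviside (τ - s) : ℝ) * g τ
        = (Icc s t).indicator g τ := by
      intro τ
      by_cases h₁ : τ ≤ t <;> by_cases h₂ : s ≤ τ <;>
        simp [Heaviside, indicator, h₁, h₂]
    have hIoc : (Ioc a b ∩ Icc s t : Set ℝ) =ᵐ[volume] Ioc s t := by
      have hsub : Ioc s t ⊆ Ioc a b := Ioc_subset_Ioc has htb
      rw [← inter_eq_right.2 hsub]
      exact (Filter.EventuallyEq.refl _ _).inter Ioc_ae_eq_Icc.symm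
    simp only [hind]
    rw [heaviside_of_nonneg (sub_nonneg.2 hst), Complex.ofReal_one, one_mul,
      intervalIntegral.integral_of_le (has.trans (hst.trans htb)),
      intervalIntegral.integral_of_le hst, setIntegral_indicator measurableSet_Icc,
      setIntegral_congr_set hIoc]
  · have hzero : ∀ τ, ((Heaviside (t - τ) : ℝ) : ℂ) * (Heaviside (τ - s) : ℝ) * g τ = 0 := by
      intro τ
      rcases le_or_gt τ t with h | h
      · simp [heaviside_of_neg (sub_neg.2 (h.trans_lt hts))]
      · simp [heaviside_of_neg (sub_neg.2 h)]
    simp [hzero, heaviside_of_neg (sub_neg.2 hts)]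

theorem integral_mul_sub_pow_div_factorial {f F : ℝ → ℂ} {s t : ℝ} (hst : s ≤ t)
    (hf : ContinuousOn f (Icc s t))
    (hF : ∀ x ∈ Icc s t, HasDerivWithinAt F (f x) (Icc s t) x) (n : ℕ) :
    ∫ τ in s..t, f τ * ((F τ - F s) ^ n / n !) = (F t - F s) ^ (n + 1) / (n + 1)! := by
  have hFc : ContinuousOn F (Icc s t) := fun x hx => (hF x hx).continuousWithinAt
  have hderiv : ∀ x ∈ Ioo s t, HasDerivAt (fun τ => (F τ - F s) ^ (n + 1) / (n + 1)!)
      (f x * ((F x - F s) ^ n / n !)) x := by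
    intro x hx
    refine ((((hF x (Ioo_subset_Icc_self hx)).hasDerivAt (Icc_mem_nhds hx.1 hx.2)).sub_const
      (F s)).pow (n + 1)).div_const ((n + 1)! : ℂ) |>.congr_deriv ?_
    rw [Nat.factorial_succ]
    push_cast
    field_simp
  rw [intervalIntegral.integral_eq_sub_of_hasDeriv_right_of_le hst
    (((hFc.sub continuousOn_const).pow _).div_const _)
    (fun x hx => (hderiv x hx).hasDerivWithinAt)
    ((hf.mul (((hFc.sub continuousOn_const).pow n).div_const _)).intervalIntegrable_of_Icc hst)]
  simp

noncomputable def expKernelTerm (F : ℝ → ℂ) (n : ℕ) (t s : ℝ) : ℂ :=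
  (F t - F s) ^ n / n ! * (Heaviside (t - s) : ℝ)

theorem expKernelTerm_zero (F : ℝ → ℂ) (t s : ℝ) :
    expKernelTerm F 0 t s = (Heaviside (t - s) : ℝ) := by
  simp [expKernelTerm]

theorem hasSum_expKernelTerm (F : ℝ → ℂ) (t s : ℝ) :
    HasSum (fun n => expKernelTerm F n t s)
      (Complex.exp (F t - F s) * (Heaviside (t - s) : ℝ)) := by
  rw [Complex.exp_eq_exp_ℂ]
  exact (NormedSpace.expSeries_div_hasSum_exp (F t - F s)).mul_right _

theorem integral_thetaK_mul_expKernelTerm {a b s t : ℝ} {f F : ℝ → ℂ}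
    (hf : ContinuousOn f (Icc a b))
    (hF : ∀ x ∈ Icc a b, HasDerivWithinAt F (f x) (Icc a b) x)
    (has : a ≤ s) (htb : t ≤ b) (n : ℕ) :
    ∫ τ in a..b, thetaK t τ * (f τ * expKernelTerm F n τ s) = expKernelTerm F (n + 1) t s := by
  have hsplit : ∀ τ, thetaK t τ * (f τ * expKernelTerm F n τ s)
      = ((Heaviside (t - τ) : ℝ) : ℂ) * (Heaviside (τ - s) : ℝ) *
          (f τ * ((F τ - F s) ^ n / n !)) :=
    fun τ => by simp only [thetaK, expKernelTerm]; ring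
  rw [funext hsplit, integral_heaviside_mul_heaviside_mul has htb, expKernelTerm]
  rcases le_or_gt s t with hst | hts
  · have hsub : Icc s t ⊆ Icc a b := Icc_subset_Icc has htb
    rw [integral_mul_sub_pow_div_factorial hst (hf.mono hsub)
      (fun x hx => (hF x (hsub hx)).mono hsub), mul_comm]
  · simp [heaviside_of_neg (sub_neg.2 hts)]

theorem starPow_eq_mul_expKernelTerm {a b : ℝ} {ft Ft : ℝ → ℂ} {f : ℝ → ℝ → ℂ}
    (hcont : ContinuousOn ft (Icc a b))
    (hprim : ∀ t ∈ Icc a b, HasDerivWithinAt Ft (ft t) (Icc a b) t)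
    (hf : ∀ t s, f t s = ft t * (Heaviside (t - s) : ℝ)) {s : ℝ} (has : a ≤ s) (n : ℕ) :
    ∀ t ∈ Icc a b, starPow a b f n t s = ft t * expKernelTerm Ft n t s := by
  induction n with
  | zero => intro t _; simp [starPow, hf, expKernelTerm]
  | succ n ih =>
    intro t ht
    have hab : a ≤ b := ht.1.trans ht.2
    calc starPow a b f (n + 1) t s
        = ∫ τ in a..b, ft t * (thetaK t τ * (ft τ * expKernelTerm Ft n τ s)) :=
          intervalIntegral.integral_congr fun τ hτ => by
            rw [hf, ih τ (uIcc_of_le hab ▸ hτ), thetaK]; ring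
      _ = ft t * expKernelTerm Ft (n + 1) t s := by
          rw [intervalIntegral.integral_const_mul,
            integral_thetaK_mul_expKernelTerm hcont hprim has ht.2]

theorem theta_starResolvent_eq_exp_general (a b : ℝ) (ft Ft : ℝ → ℂ)
    (hcont : ContinuousOn ft (Icc a b))
    (hprim : ∀ t ∈ Icc a b, HasDerivWithinAt Ft (ft t) (Icc a b) t)
    (f : ℝ → ℝ → ℂ) (hf : ∀ t s, f t s = ft t * (Heaviside (t - s) : ℝ)) :
    ∀ t ∈ Icc a b, ∀ s ∈ Icc a b,
      (Summable fun n : ℕ => starProd a b thetaK (starPow a b f n) t s) ∧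
      (Heaviside (t - s) : ℝ) + ∑' n : ℕ, starProd a b thetaK (starPow a b f n) t s
        = Complex.exp (Ft t - Ft s) * (Heaviside (t - s) : ℝ) := by
  intro t ht s hs
  have hab : a ≤ b := ht.1.trans ht.2
  have hterm : ∀ n, starProd a b thetaK (starPow a b f n) t s = expKernelTerm Ft (n + 1) t s :=
    fun n => (intervalIntegral.integral_congr fun τ hτ => by
        rw [starPow_eq_mul_expKernelTerm hcont hprim hf hs.1 n τ (uIcc_of_le hab ▸ hτ)]).trans
      (integral_thetaK_mul_expKernelTerm hcont hprim hs.1 ht.2 n)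
  have hsum := (hasSum_nat_add_iff' 1).2 (hasSum_expKernelTerm Ft t s)
  rw [Finset.sum_range_one, expKernelTerm_zero] at hsum
  simp only [hterm]
  exact ⟨hsum.summable, by rw [hsum.tsum_eq]; ring⟩

/-- For continuous `f̃` with primitive `F̃`, the series `∑_{n≥1} (Θ ★ f^{★n})(t,s)`
converges and `Θ(t-s) + ∑_{n≥1} (Θ ★ f^{★n})(t,s) = exp(F̃(t) - F̃(s)) Θ(t-s)`,
i.e. `Θ ★ R^★(f)` is the exponential kernel (here `starPow a b f n = f^{★(n+1)}`). -/
theorem theta_starResolvent_eq_exp (a b : ℝ) (hab : a ≤ b) (ft Ft : ℝ → ℂ)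
    (hcont : ContinuousOn ft (Icc a b))
    (hprim : ∀ t ∈ Icc a b, HasDerivWithinAt Ft (ft t) (Icc a b) t)
    (f : ℝ → ℝ → ℂ) (hf : ∀ t s, f t s = ft t * (Heaviside (t - s) : ℝ)) :
    ∀ t ∈ Icc a b, ∀ s ∈ Icc a b,
      (Summable fun n : ℕ => starProd a b thetaK (starPow a b f n) t s) ∧
      (Heaviside (t - s) : ℝ) + ∑' n : ℕ, starProd a b thetaK (starPow a b f n) t s
        = Complex.exp (Ft t - Ft s) * (Heaviside (t - s) : ℝ) :=
  theta_starResolvent_eq_exp_general a b ft Ft hcont hprim f hf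
end

section
/- Let ũ solve ũ′(t) = f̃(t)ũ(t) on [a,b] with ũ(a) = v ∈ ℂ, where f̃ is continuous. Then ũ(t) = exp(F̃(t) − F̃(a))·v where F̃ is the primitive of f̃ with F̃(a) = 0, and equivalently ũ(t) = (Θ(t−a) + ∑_{n≥1}(Θ ★ f^{★n})(t,a))·v. -/
open MeasureTheory Set

/-!
Since `(exp (-F̃) ũ)' = 0`, `ũ(t) = exp (F̃(t) - F̃(a)) v`. For the series, the Heaviside factor
truncates each `★`-integral to `[a, t]`, where `f̃ F̃ⁿ / n!` integrates to `F̃^{n+1} / (n+1)!`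
because `F̃(a) = 0`. By induction `f^{★(n+1)}(t, a) = f̃(t) F̃(t)ⁿ / n!`, hence
`(Θ ★ f^{★(n+1)})(t, a) = F̃(t)^{n+1} / (n+1)!`, and the bracket is the exponential series
of `F̃(t)`.
-/

open scoped Nat

theorem integral_heaviside_sub_mul {a b t : ℝ} (ht : t ∈ Icc a b) (g : ℝ → ℂ) :
    ∫ τ in a..b, (Heaviside (t - τ) : ℂ) * g τ = ∫ τ in a..t, g τ := by
  have h : ∀ τ, (Heaviside (t - τ) : ℂ) * g τ = indicator {x | x ≤ t} g τ := fun τ => by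
    by_cases hτ : τ ≤ t <;> simp [Heaviside, hτ]
  simp_rw [h]
  exact intervalIntegral.integral_indicator ht

theorem eq_exp_sub_mul_of_hasDerivWithinAt_mul {a b : ℝ} {g G u : ℝ → ℂ}
    (hG : ∀ t ∈ Icc a b, HasDerivWithinAt G (g t) (Icc a b) t)
    (hu : ∀ t ∈ Icc a b, HasDerivWithinAt u (g t * u t) (Icc a b) t) :
    ∀ t ∈ Icc a b, u t = Complex.exp (G t - G a) * u a := by
  have hderiv : ∀ t ∈ Icc a b,
      HasDerivWithinAt (fun τ => Complex.exp (-G τ) * u τ) 0 (Icc a b) t := fun t ht =>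
    ((hG t ht).fun_neg.cexp.mul (hu t ht)).congr_deriv (by ring)
  have hconst : ∀ t ∈ Icc a b, Complex.exp (-G t) * u t = Complex.exp (-G a) * u a :=
    constant_of_has_deriv_right_zero (fun t ht => (hderiv t ht).continuousWithinAt)
      fun t ht => (hderiv t (Ico_subset_Icc_self ht)).mono_of_mem_nhdsWithin
        (Icc_mem_nhdsGE_of_mem ht)
  intro t ht
  calc u t = Complex.exp (G t) * (Complex.exp (-G t) * u t) := by
        rw [← mul_assoc, ← Complex.exp_add, add_neg_cancel, Complex.exp_zero, one_mul]
    _ = Complex.exp (G t - G a) * u a := by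
        rw [hconst t ht, ← mul_assoc, ← Complex.exp_add, sub_eq_add_neg]

theorem integral_mul_pow_div_factorial {a b : ℝ} {g G : ℝ → ℂ} (hab : a ≤ b)
    (hg : ContinuousOn g (Icc a b)) (hG : ∀ t ∈ Icc a b, HasDerivWithinAt G (g t) (Icc a b) t)
    (hGa : G a = 0) (n : ℕ) :
    ∫ τ in a..b, g τ * (G τ ^ n / n !) = G b ^ (n + 1) / (n + 1)! := by
  have hGcont : ContinuousOn G (Icc a b) := fun t ht => (hG t ht).continuousWithinAt
  have hderiv : ∀ t ∈ Ioo a b,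
      HasDerivAt (fun τ => G τ ^ (n + 1) / (n + 1)!) (g t * (G t ^ n / n !)) t := fun t ht => by
    refine ((((hG t (Ioo_subset_Icc_self ht)).fun_pow (n + 1)).div_const _).hasDerivAt
      (Icc_mem_nhds ht.1 ht.2)).congr_deriv ?_
    rw [Nat.factorial_succ, Nat.add_sub_cancel]
    push_cast
    field_simp
  rw [intervalIntegral.integral_eq_sub_of_hasDerivAt_of_le hab
    ((hGcont.fun_pow _).div_const _) hderiv
    ((hg.mul ((hGcont.pow n).div_const _)).intervalIntegrable_of_Icc hab), hGa]
  simp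

theorem integral_heaviside_sub_mul_eq_pow_div_factorial {a b t : ℝ} {g G k : ℝ → ℂ}
    (hg : ContinuousOn g (Icc a b)) (hG : ∀ t ∈ Icc a b, HasDerivWithinAt G (g t) (Icc a b) t)
    (hGa : G a = 0) (n : ℕ) (hk : EqOn k (fun τ => g τ * (G τ ^ n / n !)) (Icc a b))
    (ht : t ∈ Icc a b) :
    ∫ τ in a..b, (Heaviside (t - τ) : ℂ) * k τ = G t ^ (n + 1) / (n + 1)! := by
  have hsub : Icc a t ⊆ Icc a b := Icc_subset_Icc_right ht.2
  calc ∫ τ in a..b, (Heaviside (t - τ) : ℂ) * k τ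
      = ∫ τ in a..b, (Heaviside (t - τ) : ℂ) * (g τ * (G τ ^ n / n !)) :=
        intervalIntegral.integral_congr fun τ hτ => by
          rw [uIcc_of_le (ht.1.trans ht.2)] at hτ
          simp only [hk hτ]
    _ = ∫ τ in a..t, g τ * (G τ ^ n / n !) := integral_heaviside_sub_mul ht _
    _ = G t ^ (n + 1) / (n + 1)! := integral_mul_pow_div_factorial ht.1 (hg.mono hsub)
        (fun τ hτ => (hG τ (hsub hτ)).mono hsub) hGa n

theorem Complex.one_add_tsum_pow_succ_div_factorial (x : ℂ) :
    1 + ∑' n : ℕ, x ^ (n + 1) / (n + 1)! = Complex.exp x := by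
  rw [Complex.exp_eq_exp_ℂ, NormedSpace.exp_eq_tsum_div]
  beta_reduce
  rw [(NormedSpace.expSeries_div_summable x).tsum_eq_zero_add]
  simp

theorem starPow_apply_eq_mul_pow_div_factorial {a b : ℝ} {ft Ft : ℝ → ℂ} {f : ℝ → ℝ → ℂ}
    (hcont : ContinuousOn ft (Icc a b))
    (hprim : ∀ t ∈ Icc a b, HasDerivWithinAt Ft (ft t) (Icc a b) t) (hFa : Ft a = 0)
    (hf : ∀ t s, f t s = ft t * (Heaviside (t - s) : ℝ)) (n : ℕ) :
    EqOn (fun t => starPow a b f n t a) (fun t => ft t * (Ft t ^ n / n !)) (Icc a b) := by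
  induction n with
  | zero =>
    intro t ht
    simp [starPow, hf, heaviside_of_nonneg (sub_nonneg.2 ht.1)]
  | succ n ih =>
    intro t ht
    simp only [starPow, starProd, hf, mul_assoc]
    rw [intervalIntegral.integral_const_mul,
      integral_heaviside_sub_mul_eq_pow_div_factorial hcont hprim hFa n ih ht]

theorem starProd_thetaK_starPow_apply {a b t : ℝ} {ft Ft : ℝ → ℂ} {f : ℝ → ℝ → ℂ}
    (hcont : ContinuousOn ft (Icc a b))
    (hprim : ∀ t ∈ Icc a b, HasDerivWithinAt Ft (ft t) (Icc a b) t) (hFa : Ft a = 0)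
    (hf : ∀ t s, f t s = ft t * (Heaviside (t - s) : ℝ)) (ht : t ∈ Icc a b) (n : ℕ) :
    starProd a b thetaK (starPow a b f n) t a = Ft t ^ (n + 1) / (n + 1)! :=
  integral_heaviside_sub_mul_eq_pow_div_factorial hcont hprim hFa n
    (starPow_apply_eq_mul_pow_div_factorial hcont hprim hFa hf n) ht

theorem ode_solution_eq_starResolvent_general (a b : ℝ)
    (ft Ft : ℝ → ℂ) (hcont : ContinuousOn ft (Icc a b))
    (hprim : ∀ t ∈ Icc a b, HasDerivWithinAt Ft (ft t) (Icc a b) t) (hFa : Ft a = 0)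
    (f : ℝ → ℝ → ℂ) (hf : ∀ t s, f t s = ft t * (Heaviside (t - s) : ℝ))
    (v : ℂ) (u : ℝ → ℂ) (hua : u a = v)
    (hu : ∀ t ∈ Icc a b, HasDerivWithinAt u (ft t * u t) (Icc a b) t) :
    ∀ t ∈ Icc a b,
      u t = Complex.exp (Ft t - Ft a) * v ∧
      u t = ((Heaviside (t - a) : ℝ)
              + ∑' n : ℕ, starProd a b thetaK (starPow a b f n) t a) * v := by
  intro t ht
  have hu_exp : u t = Complex.exp (Ft t - Ft a) * v := by
    rw [← hua]
    exact eq_exp_sub_mul_of_hasDerivWithinAt_mul hprim hu t ht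
  refine ⟨hu_exp, ?_⟩
  rw [hu_exp, hFa, sub_zero, heaviside_of_nonneg (sub_nonneg.2 ht.1), Complex.ofReal_one,
    tsum_congr (starProd_thetaK_starPow_apply hcont hprim hFa hf ht),
    Complex.one_add_tsum_pow_succ_div_factorial]

/-- If `ũ` solves `ũ' = f̃ ũ` on `[a,b]` with `ũ(a) = v`, then
`ũ(t) = exp(F̃(t) - F̃(a)) v` where `F̃` is the primitive of `f̃` with `F̃(a) = 0`, and
equivalently `ũ(t) = (Θ(t-a) + ∑_{n≥1} (Θ ★ f^{★n})(t,a)) v`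
(here `starPow a b f n = f^{★(n+1)}`). -/
theorem ode_solution_eq_starResolvent (a b : ℝ) (hab : a ≤ b)
    (ft Ft : ℝ → ℂ) (hcont : ContinuousOn ft (Icc a b))
    (hprim : ∀ t ∈ Icc a b, HasDerivWithinAt Ft (ft t) (Icc a b) t) (hFa : Ft a = 0)
    (f : ℝ → ℝ → ℂ) (hf : ∀ t s, f t s = ft t * (Heaviside (t - s) : ℝ))
    (v : ℂ) (u : ℝ → ℂ) (hua : u a = v)
    (hu : ∀ t ∈ Icc a b, HasDerivWithinAt u (ft t * u t) (Icc a b) t) :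
    ∀ t ∈ Icc a b,
      u t = Complex.exp (Ft t - Ft a) * v ∧
      u t = ((Heaviside (t - a) : ℝ)
              + ∑' n : ℕ, starProd a b thetaK (starPow a b f n) t a) * v :=
  ode_solution_eq_starResolvent_general a b ft Ft hcont hprim hFa f hf v u hua hu
end
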